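/- Every prime graph with no induced hole (chordless cycle of length ≥ 5) and no induced bull is nearly weakly chordal: for every vertex v, the subgraph induced on A(v) has no induced C_k and no induced complement of C_k for any k ≥ 5. -/

import Mathlib

open SimpleGraph

/-- The dart: vertices a,b,c,d,e = 0,1,2,3,4; edges ab, ac, ad, bd, cd, de. -/
def dartGraph : SimpleGraph (Fin 5) :=
  SimpleGraph.fromEdgeSet {s(0,1), s(0,2), s(0,3), s(1,3), s(2,3), s(3,4)}

/-- The bull: vertices a,b,c,d,e = 0,1,2,3,4; edges ab, bc, cd, be, ce. -/
def bullGraph : SimpleGraph (Fin 5) :=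
  SimpleGraph.fromEdgeSet {s(0,1), s(1,2), s(2,3), s(1,4), s(2,4)}

/-- The house: C4 on v1..v4 = 0..3 plus v5 = 4 adjacent to v2 = 1 and v3 = 2. -/
def houseGraph : SimpleGraph (Fin 5) :=
  SimpleGraph.fromEdgeSet {s(0,1), s(1,2), s(2,3), s(3,0), s(4,1), s(4,2)}

/-- Anti-neighborhood of a vertex: all vertices distinct from and nonadjacent to `v`. -/
def vertexAnti {V : Type*} (G : SimpleGraph V) (v : V) : Set V :=
  {u | u ≠ v ∧ ¬ G.Adj v u}

/-- Anti-neighborhood of a set `S`: vertices outside `S` with no neighbor in `S`. -/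
def antiNbhd {V : Type*} (G : SimpleGraph V) (S : Set V) : Set V :=
  {v | v ∉ S ∧ ∀ u ∈ S, ¬ G.Adj v u}

/-- Contact vertices of `S`: outside `S`, with a neighbor in `S` and a neighbor in `antiNbhd G S`. -/
def contactSet {V : Type*} (G : SimpleGraph V) (S : Set V) : Set V :=
  {v | v ∉ S ∧ (∃ u ∈ S, G.Adj v u) ∧ ∃ w ∈ antiNbhd G S, G.Adj v w}

/-- `G` has a clique cutset: a clique whose removal disconnects the graph. -/
def HasCliqueCutset {V : Type*} (G : SimpleGraph V) : Prop :=
  ∃ C : Set V, G.IsClique C ∧ ¬ (G.induce Cᶜ).Preconnected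

/-- `U` is a module: no outside vertex distinguishes two vertices of `U`. -/
def IsModule {V : Type*} (G : SimpleGraph V) (U : Set V) : Prop :=
  ∀ z ∉ U, (∀ x ∈ U, G.Adj z x) ∨ (∀ x ∈ U, ¬ G.Adj z x)

/-- `G` is prime: all its modules are trivial. -/
def IsPrime {V : Type*} (G : SimpleGraph V) : Prop :=
  ∀ U : Set V, IsModule G U → U = ∅ ∨ (∃ x, U = {x}) ∨ U = Set.univ

/-- `G` is perfect: every induced subgraph has chromatic number equal to clique number. -/
def IsPerfect {V : Type*} (G : SimpleGraph V) : Prop :=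
  ∀ s : Set V, (G.induce s).chromaticNumber = ((G.induce s).cliqueNum : ℕ∞)

/-- Distance from a vertex to a set of vertices. -/
noncomputable def setDist {V : Type*} (G : SimpleGraph V) (v : V) (S : Set V) : ℕ :=
  sInf {n | ∃ u ∈ S, n = G.dist v u}

/-! Holes in `A(v)` are holes of `G`, and the antihole on five vertices is a `C₅`.
Let `Z` be an antihole of length `k ≥ 6` in `A(v)`, and call a vertex outside `Z` a contact vertex
if it has a neighbour in `Z` and a neighbour anticomplete to `Z`. A bull or a `C₅` shows that a
contact vertex is complete to `Z`, and then, stepping along non-edges, that it is complete to every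
vertex reachable from `Z` in the complement of `G` without passing through contact vertices or
vertices anticomplete to `Z`. So this reachable set is a module; it contains `Z` but not `v`,
contradicting primality. -/

open scoped Fin.NatCast Fin.CommRing

section Induced
variable {V W : Type*} {G : SimpleGraph V} {H : SimpleGraph W}

lemma false_of_adj_iff (hH : IsEmpty (H ↪g G))
    (hsep : ∀ i j, i ≠ j → ∃ l, ¬ (H.Adj i l ↔ H.Adj j l)) (f : W → V)
    (hf : ∀ i j, G.Adj (f i) (f j) ↔ H.Adj i j) : False := by
  refine hH.false ⟨⟨f, fun i j hij => ?_⟩, hf _ _⟩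
  by_contra hne
  obtain ⟨l, hl⟩ := hsep i j hne
  exact hl ((hf i l).symm.trans (hij ▸ hf j l))

lemma false_of_bull (hbull : IsEmpty (bullGraph ↪g G)) {a b c d e : V}
    (hab : G.Adj a b) (hbc : G.Adj b c) (hcd : G.Adj c d) (hbe : G.Adj b e) (hce : G.Adj c e)
    (hac : ¬ G.Adj a c) (had : ¬ G.Adj a d) (hae : ¬ G.Adj a e) (hbd : ¬ G.Adj b d)
    (hde : ¬ G.Adj d e) : False := by
  have hadj : ∀ i j, bullGraph.Adj i j ↔
      (s(i, j) ∈ ({s(0,1), s(1,2), s(2,3), s(1,4), s(2,4)} : Set (Sym2 (Fin 5))) ∧ i ≠ j) :=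
    fun i j => SimpleGraph.fromEdgeSet_adj _
  refine false_of_adj_iff hbull ?_ ![a, b, c, d, e] ?_
  · intro i j
    simp only [hadj]
    decide +revert
  · intro i j
    fin_cases i <;> fin_cases j <;> simp [G.adj_comm, *]

lemma false_of_c5 (hC5 : IsEmpty (cycleGraph 5 ↪g G)) {a b c d e : V}
    (hab : G.Adj a b) (hbc : G.Adj b c) (hcd : G.Adj c d) (hde : G.Adj d e) (hea : G.Adj e a)
    (hac : ¬ G.Adj a c) (had : ¬ G.Adj a d) (hbd : ¬ G.Adj b d) (hbe : ¬ G.Adj b e)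
    (hce : ¬ G.Adj c e) : False := by
  refine false_of_adj_iff hC5 (by decide) ![a, b, c, d, e] ?_
  intro i j
  fin_cases i <;> fin_cases j <;> simp +decide [G.adj_comm, hea.symm, *]

def cycleGraphFiveEmbeddingCompl : cycleGraph 5 ↪g (cycleGraph 5)ᶜ :=
  ⟨⟨fun i => 2 * i, by decide⟩, by decide⟩

end Induced

lemma Fin.exists_and_not_add_one {k : ℕ} [NeZero k] {P : Fin k → Prop}
    (hP : ∃ i, P i) (hnP : ∃ i, ¬ P i) : ∃ j, P j ∧ ¬ P (j + 1) := by
  by_contra! hstep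
  obtain ⟨p, hp⟩ := hP
  obtain ⟨q, hq⟩ := hnP
  have hall : ∀ n : ℕ, P (p + n) := by
    intro n
    induction n with
    | zero => simpa using hp
    | succ n ih => simpa [add_assoc] using hstep _ ih
  exact hq (by simpa using hall (q - p).val)

lemma Fin.val_natCast_sub_natCast {k : ℕ} [NeZero k] {c d : ℕ} (hc : c < k) (hd : d < k) :
    ((c : Fin k) - d).val = if d ≤ c then c - d else k + c - d := by
  have hc' : (c : Fin k).val = c := Fin.val_cast_of_lt hc
  have hd' : (d : Fin k).val = d := Fin.val_cast_of_lt hd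
  split_ifs with h
  · rw [Fin.sub_val_of_le (by rw [Fin.le_def, hc', hd']; exact h), hc', hd']
  · rw [Fin.coe_sub_iff_lt.2 (by rw [Fin.lt_def, hc', hd']; omega), hc', hd']

section Antihole
variable {V : Type*} {G : SimpleGraph V} {k : ℕ}

/-- `w 0, …, w (k - 1)` induce the complement of the cycle `w 0 w 1 ⋯ w (k - 1)`. Positions are
natural numbers, so that every adjacency between them is decided by `omega`. -/
def IsAntiholeSeq (G : SimpleGraph V) (k : ℕ) (w : ℕ → V) : Prop :=
  ∀ c d, c < k → d < k →
    (G.Adj (w c) (w d) ↔ c + 2 ≤ d ∧ d + 2 ≤ c + k ∨ d + 2 ≤ c ∧ c + 2 ≤ d + k)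

lemma isAntiholeSeq_add [NeZero k] (g : (cycleGraph k)ᶜ ↪g G) (p : Fin k) :
    IsAntiholeSeq G k (fun m => g (p + m)) := by
  intro c d hc hd
  rw [g.map_adj_iff, compl_adj, cycleGraph_adj', add_sub_add_left_eq_sub,
    add_sub_add_left_eq_sub, Ne, add_right_inj, Fin.ext_iff, Fin.val_cast_of_lt hc,
    Fin.val_cast_of_lt hd, Fin.val_natCast_sub_natCast hc hd, Fin.val_natCast_sub_natCast hd hc]
  split_ifs <;> omega

lemma exists_adj_add_two_and_not_adj_add_three [NeZero k] (g : (cycleGraph k)ᶜ ↪g G) {b : V}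
    (hb : ∃ i, G.Adj b (g i)) (hb' : ∃ i, ¬ G.Adj b (g i)) :
    ∃ p : Fin k, G.Adj b (g (p + (2 : ℕ))) ∧ ¬ G.Adj b (g (p + (3 : ℕ))) := by
  obtain ⟨j, hj, hj'⟩ := Fin.exists_and_not_add_one hb hb'
  refine ⟨j - 2, by simpa using hj, ?_⟩
  convert hj' using 3
  push_cast
  ring

namespace IsAntiholeSeq
variable {w : ℕ → V}

lemma adj (hw : IsAntiholeSeq G k w) {c d : ℕ}
    (h : c < k ∧ d < k ∧ (c + 2 ≤ d ∧ d + 2 ≤ c + k ∨ d + 2 ≤ c ∧ c + 2 ≤ d + k)) :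
    G.Adj (w c) (w d) :=
  (hw c d h.1 h.2.1).2 h.2.2

lemma not_adj (hw : IsAntiholeSeq G k w) {c d : ℕ}
    (h : c < k ∧ d < k ∧ (d = c + 1 ∨ c = d + 1)) : ¬ G.Adj (w c) (w d) :=
  fun hcd => by have := (hw c d h.1 h.2.1).1 hcd; omega

lemma false_of_adj_of_boundary (hw : IsAntiholeSeq G k w) (hk : 6 ≤ k)
    (hbull : IsEmpty (bullGraph ↪g G)) (hC5 : IsEmpty (cycleGraph 5 ↪g G)) {a b : V}
    (ha : ∀ m, ¬ G.Adj a (w m)) (hab : G.Adj a b) (hb2 : G.Adj b (w 2))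
    (hb3 : ¬ G.Adj b (w 3)) : False := by
  have hN : ∀ m < k, G.Adj b (w m) → m = 1 ∨ m = 2 ∨ m = 3 ∨ m = 4 := by
    intro m hm hbm
    by_contra h
    exact false_of_bull hbull hab hbm (hw.adj (by omega)) hb2 (hw.adj (by omega)) (ha m) (ha 3)
      (ha 2) hb3 (hw.not_adj (by omega))
  have hb0 : ¬ G.Adj b (w 0) := fun h => by have := hN 0 (by omega) h; omega
  have hb4 : ¬ G.Adj b (w 4) := fun hb4 =>
    false_of_bull hbull hab hb2 (hw.adj (by omega)) hb4 (hw.adj (by omega)) (ha 2) (ha 5) (ha 4)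
      (fun h => by have := hN 5 (by omega) h; omega) (hw.not_adj (by omega))
  have hb1 : ¬ G.Adj b (w 1) := fun hb1 =>
    false_of_c5 hC5 hb1 (hw.adj (by omega)) (hw.adj (by omega)) (hw.adj (by omega)) hb2.symm hb3
      hb0 (hw.not_adj (by omega)) (hw.not_adj (by omega)) (hw.not_adj (by omega))
  exact false_of_bull hbull hb2 (hw.adj (by omega)) (hw.adj (by omega)) (hw.adj (by omega))
    (hw.adj (by omega)) hb4 hb1 hb0 (hw.not_adj (by omega)) (hw.not_adj (by omega))

lemma exists_adj_cut (hw : IsAntiholeSeq G k w) (hk : 5 ≤ k) {b : V} (hb2 : G.Adj b (w 2))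
    (hb3 : ¬ G.Adj b (w 3)) : ∃ c d, G.Adj (w c) (w d) ∧ G.Adj b (w c) ∧ ¬ G.Adj b (w d) := by
  by_cases hb4 : G.Adj b (w 4)
  · by_cases hb1 : G.Adj b (w 1)
    · exact ⟨1, 3, hw.adj (by omega), hb1, hb3⟩
    · exact ⟨4, 1, hw.adj (by omega), hb4, hb1⟩
  · exact ⟨2, 4, hw.adj (by omega), hb2, hb4⟩

end IsAntiholeSeq
end Antihole

section CoSpan
variable {V : Type*} {G : SimpleGraph V} {Z : Set V} {a u : V}

def coSpan (G : SimpleGraph V) (Z : Set V) : Set V :=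
  {u | ∃ z ∈ Z, Relation.ReflTransGen
    (fun x y => Gᶜ.Adj x y ∧ y ∉ antiNbhd G Z ∧ y ∉ contactSet G Z) z u}

lemma subset_coSpan : Z ⊆ coSpan G Z := fun z hz => ⟨z, hz, .refl⟩

lemma mem_or_of_mem_coSpan (hu : u ∈ coSpan G Z) :
    u ∈ Z ∨ u ∉ antiNbhd G Z ∧ u ∉ contactSet G Z := by
  obtain ⟨z, hz, hzu⟩ := hu
  rcases hzu.cases_tail with rfl | ⟨_, -, -, huA, huC⟩
  · exact .inl hz
  · exact .inr ⟨huA, huC⟩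

lemma exists_adj_of_notMem_antiNbhd (hu : u ∉ Z) (huA : u ∉ antiNbhd G Z) :
    ∃ z ∈ Z, G.Adj u z := by
  by_contra! h
  exact huA ⟨hu, h⟩

lemma not_adj_of_notMem_contactSet (hu : u ∉ Z) (huA : u ∉ antiNbhd G Z)
    (huC : u ∉ contactSet G Z) (ha : a ∈ antiNbhd G Z) : ¬ G.Adj u a :=
  fun hua => huC ⟨hu, exists_adj_of_notMem_antiNbhd hu huA, a, ha, hua⟩

lemma not_adj_of_mem_antiNbhd_of_mem_coSpan (ha : a ∈ antiNbhd G Z) (hu : u ∈ coSpan G Z) :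
    ¬ G.Adj a u := by
  by_cases huZ : u ∈ Z
  · exact ha.2 u huZ
  · obtain ⟨huA, huC⟩ := (mem_or_of_mem_coSpan hu).resolve_left huZ
    exact fun hau => not_adj_of_notMem_contactSet huZ huA huC ha hau.symm

lemma notMem_coSpan_of_mem_antiNbhd (ha : a ∈ antiNbhd G Z) : a ∉ coSpan G Z := fun hu =>
  (mem_or_of_mem_coSpan hu).elim ha.1 fun h => h.1 ha

lemma isModule_coSpan (h : ∀ x ∈ contactSet G Z, ∀ u ∈ coSpan G Z, G.Adj x u) :
    IsModule G (coSpan G Z) := by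
  intro t ht
  by_cases htA : t ∈ antiNbhd G Z
  · exact .inr fun u hu => not_adj_of_mem_antiNbhd_of_mem_coSpan htA hu
  by_cases htC : t ∈ contactSet G Z
  · exact .inl (h t htC)
  refine .inl fun u hu => ?_
  by_contra htu
  obtain ⟨z, hz, hzu⟩ := hu
  have hne : u ≠ t := by rintro rfl; exact ht ⟨z, hz, hzu⟩
  exact ht ⟨z, hz, hzu.tail ⟨(compl_adj G u t).2 ⟨hne, fun h => htu h.symm⟩, htA, htC⟩⟩

end CoSpan

lemma IsPrime.eq_univ_of_isModule {V : Type*} {G : SimpleGraph V} (hG : IsPrime G) {U : Set V}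
    (hU : IsModule G U) {x y : V} (hx : x ∈ U) (hy : y ∈ U) (hxy : x ≠ y) : U = Set.univ := by
  rcases hG U hU with rfl | ⟨z, rfl⟩ | h
  · exact absurd hx (Set.notMem_empty x)
  · exact absurd (hx.trans hy.symm) hxy
  · exact h

section PrimeAntihole
variable {V : Type*} {G : SimpleGraph V} {k : ℕ}

lemma adj_of_mem_contactSet (hk : 6 ≤ k) (hbull : IsEmpty (bullGraph ↪g G))
    (hC5 : IsEmpty (cycleGraph 5 ↪g G)) (g : (cycleGraph k)ᶜ ↪g G) {x : V}
    (hx : x ∈ contactSet G (Set.range g)) (i : Fin k) : G.Adj x (g i) := by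
  have : NeZero k := NeZero.of_pos (by omega)
  obtain ⟨-, ⟨_, ⟨j, rfl⟩, hxj⟩, a, ha, hxa⟩ := hx
  by_contra hxi
  obtain ⟨p, hp2, hp3⟩ := exists_adj_add_two_and_not_adj_add_three g ⟨j, hxj⟩ ⟨i, hxi⟩
  exact (isAntiholeSeq_add g p).false_of_adj_of_boundary hk hbull hC5
    (fun m => ha.2 _ ⟨_, rfl⟩) hxa.symm hp2 hp3

lemma adj_of_mem_contactSet_of_mem_coSpan (hk : 6 ≤ k) (hbull : IsEmpty (bullGraph ↪g G))
    (hC5 : IsEmpty (cycleGraph 5 ↪g G)) (g : (cycleGraph k)ᶜ ↪g G) {x u : V}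
    (hx : x ∈ contactSet G (Set.range g)) (hu : u ∈ coSpan G (Set.range g)) : G.Adj x u := by
  have : NeZero k := NeZero.of_pos (by omega)
  have hxZ := adj_of_mem_contactSet hk hbull hC5 g hx
  obtain ⟨-, -, a, ha, hxa⟩ := hx
  obtain ⟨_, ⟨i, rfl⟩, hiu⟩ := hu
  induction hiu with
  | refl => exact hxZ i
  | @tail u y hiu huy ih =>
    obtain ⟨huy, hyA, hyC⟩ := huy
    rw [compl_adj] at huy
    by_cases hyZ : y ∈ Set.range g
    · obtain ⟨j, rfl⟩ := hyZ
      exact hxZ j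
    have hay : ¬ G.Adj a y := fun h => not_adj_of_notMem_contactSet hyZ hyA hyC ha h.symm
    by_contra hxy
    by_cases hcompl : ∀ j, G.Adj y (g j)
    · have hu : u ∈ coSpan G (Set.range g) := ⟨_, ⟨i, rfl⟩, hiu⟩
      have huZ : u ∉ Set.range g := by rintro ⟨j, rfl⟩; exact huy.2 (hcompl j).symm
      obtain ⟨_, ⟨j, rfl⟩, huj⟩ := exists_adj_of_notMem_antiNbhd huZ
        ((mem_or_of_mem_coSpan hu).resolve_left huZ).1
      exact false_of_bull hbull hxa.symm (hxZ j) (hcompl j).symm ih huj.symm (ha.2 _ ⟨j, rfl⟩)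
        hay (not_adj_of_mem_antiNbhd_of_mem_coSpan ha hu) hxy (fun h => huy.2 h.symm)
    · obtain ⟨_, ⟨j, rfl⟩, hyj⟩ := exists_adj_of_notMem_antiNbhd hyZ hyA
      obtain ⟨p, hp2, hp3⟩ := exists_adj_add_two_and_not_adj_add_three g ⟨j, hyj⟩ (not_forall.1 hcompl)
      obtain ⟨c, d, hcd, hyc, hyd⟩ :=
        (isAntiholeSeq_add g p).exists_adj_cut (by omega) hp2 hp3
      exact false_of_bull hbull hxa.symm (hxZ _) hyc.symm (hxZ _) hcd (ha.2 _ ⟨_, rfl⟩) hay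
        (ha.2 _ ⟨_, rfl⟩) hxy hyd

theorem antiNbhd_range_eq_empty (hG : IsPrime G) (hk : 6 ≤ k)
    (hbull : IsEmpty (bullGraph ↪g G)) (hC5 : IsEmpty (cycleGraph 5 ↪g G))
    (g : (cycleGraph k)ᶜ ↪g G) : antiNbhd G (Set.range g) = ∅ := by
  have : NeZero k := NeZero.of_pos (by omega)
  have hmod : IsModule G (coSpan G (Set.range g)) := isModule_coSpan fun _ hx _ hu =>
    adj_of_mem_contactSet_of_mem_coSpan hk hbull hC5 g hx hu
  have h01 : g 0 ≠ g 1 := g.injective.ne (by simp [Fin.ext_iff]; omega)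
  have huniv := hG.eq_univ_of_isModule hmod (subset_coSpan ⟨0, rfl⟩) (subset_coSpan ⟨1, rfl⟩) h01
  exact Set.eq_empty_of_forall_notMem fun v hv =>
    notMem_coSpan_of_mem_antiNbhd hv (huniv ▸ Set.mem_univ v)

end PrimeAntihole

theorem stmt11_general {V : Type*} (G : SimpleGraph V)
    (hprime : IsPrime G)
    (hhole : ∀ k : ℕ, 5 ≤ k → IsEmpty (cycleGraph k ↪g G))
    (hbull : IsEmpty (bullGraph ↪g G))
    (v : V) (k : ℕ) (hk : 5 ≤ k) :
    IsEmpty (cycleGraph k ↪g G.induce (vertexAnti G v)) ∧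
      IsEmpty ((cycleGraph k)ᶜ ↪g G.induce (vertexAnti G v)) := by
  have hC5 := hhole 5 le_rfl
  refine ⟨⟨fun f => (hhole k hk).false ((Embedding.induce _).comp f)⟩, ⟨fun f => ?_⟩⟩
  let g := (Embedding.induce _).comp f
  obtain rfl | hk6 : k = 5 ∨ 6 ≤ k := by omega
  · exact hC5.false (g.comp cycleGraphFiveEmbeddingCompl)
  have hv : v ∈ antiNbhd G (Set.range g) :=
    ⟨fun ⟨i, hi⟩ => (f i).2.1 hi, fun _ ⟨i, hi⟩ => hi ▸ (f i).2.2⟩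
  simp [antiNbhd_range_eq_empty hprime hk6 hbull hC5 g] at hv

theorem stmt11 {V : Type*} [Fintype V] (G : SimpleGraph V)
    (hprime : IsPrime G)
    (hhole : ∀ k : ℕ, 5 ≤ k → IsEmpty (cycleGraph k ↪g G))
    (hbull : IsEmpty (bullGraph ↪g G))
    (v : V) (k : ℕ) (hk : 5 ≤ k) :
    IsEmpty (cycleGraph k ↪g G.induce (vertexAnti G v)) ∧
      IsEmpty ((cycleGraph k)ᶜ ↪g G.induce (vertexAnti G v)) :=
  stmt11_general G hprime hhole hbull v k hk
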